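/- arXiv:2109.04445 — 2 statements merged into one kernel-verified Lean document; each statement's English description precedes it below -/
import Mathlib

section
/- Let G be a finite abelian group with |G| > 1 and let L ∈ ℤ^{1×d} be a matrix all of whose coefficients are coprime to |G|. If d is odd, then L is not fully Sidorenko in G; that is, there exists a function f : G → [0,1] with t_L(f) < (E(f))^d. -/
open Finset

variable {G : Type*} [AddCommGroup G] [Fintype G] [DecidableEq G]

/-- The configuration `C(L)` given by a matrix `L ∈ ℤ^{1×d}`: the kernel in `G^d` of the
induced map `v ↦ ∑ i, L 0 i • v i`. -/
def config {d : ℕ} (L : Matrix (Fin 1) (Fin d) ℤ) : Finset (Fin d → G) :=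
  Finset.univ.filter fun v => ∑ i, L 0 i • v i = 0

/-- The arithmetic multiplicity `t_L(f)`. -/
noncomputable def tL {d : ℕ} (L : Matrix (Fin 1) (Fin d) ℤ) (f : G → ℝ) : ℝ :=
  (∑ v ∈ config L, ∏ i, f (v i)) / ((config (G := G) L).card : ℝ)

/-- The average `E(f)` of `f` over `G`. -/
noncomputable def avg (f : G → ℝ) : ℝ := (∑ x, f x) / (Fintype.card G : ℝ)

/-- `L` admits a canceling partition in `G`: a partition of the index set into (distinct) pairs,
encoded by a fixed-point-free involution `σ`, such that for each pair `{i, σ i}` the pair of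
coefficients `(L 0 i, L 0 (σ i))` is canceling in `G`, i.e. their sum acts trivially on `G`. -/
def HasCancelingPartition (G : Type*) [AddCommGroup G] {d : ℕ}
    (L : Matrix (Fin 1) (Fin d) ℤ) : Prop :=
  ∃ σ : Equiv.Perm (Fin d), (∀ i, σ i ≠ i) ∧ (∀ i, σ (σ i) = i) ∧
    ∀ i, ∀ x : G, (L 0 i + L 0 (σ i)) • x = 0

/-! The indicator `δ` of `0` has `t_L(δ) = 1 / |C(L)| = |G|^(1-d)`, strictly more than
`E(δ)^d = |G|^(-d)`. When every coefficient acts invertibly on `G`, all mixed terms in the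
multilinear expansion of `t_L(E f + (f - E f))` vanish, so `t_L(f) = E(f)^d + t_L(f - E f)`.
Since `t_L` is homogeneous of odd degree `d` and `1 - δ - E(1 - δ) = -(δ - E δ)`, this gives
`t_L(1 - δ) = E(1 - δ)^d - (t_L(δ) - E(δ)^d) < E(1 - δ)^d`. -/

theorem zsmul_surjective_of_isCoprime_card {A : Type*} [AddCommGroup A] [Fintype A] {c : ℤ}
    (hc : IsCoprime c (Fintype.card A : ℤ)) : Function.Surjective (c • · : A → A) := by
  obtain ⟨u, v, huv⟩ := hc
  intro t
  refine ⟨u • t, ?_⟩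
  have hcard : (Fintype.card A : ℤ) • t = 0 := by rw [natCast_zsmul, card_nsmul_eq_zero]
  calc c • u • t = (1 - v * Fintype.card A) • t := by
        rw [smul_smul, ← huv, mul_comm, add_sub_cancel_right]
    _ = t := by rw [sub_smul, one_smul, mul_smul, hcard, smul_zero, sub_zero]

theorem sum_zsmul_add_single {A : Type*} [AddCommGroup A] {d : ℕ} (c : Fin d → ℤ)
    (v : Fin d → A) (j : Fin d) (z : A) :
    ∑ i, c i • (v + Pi.single j z : Fin d → A) i = ∑ i, c i • v i + c j • z := by
  simp [smul_add, sum_add_distrib, Pi.single_apply]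

theorem avg_const_sub {A : Type*} [AddCommGroup A] [Fintype A] (c : ℝ) (f : A → ℝ) :
    avg (fun x => c - f x) = c - avg f := by
  have hG : (Fintype.card A : ℝ) ≠ 0 := by simp
  simp only [avg, sum_sub_distrib, sum_const, card_univ, nsmul_eq_mul, sub_div]
  rw [mul_div_cancel_left₀ _ hG]

theorem sum_sub_avg_eq_zero {A : Type*} [AddCommGroup A] [Fintype A] (f : A → ℝ) :
    ∑ x, (f x - avg f) = 0 := by
  have hG : (Fintype.card A : ℝ) ≠ 0 := by simp
  rw [sum_sub_distrib, sum_const, card_univ, nsmul_eq_mul, avg, mul_div_cancel₀ _ hG, sub_self]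

section Config

variable {d : ℕ} (L : Matrix (Fin 1) (Fin d) ℤ)

theorem zero_mem_config : (0 : Fin d → G) ∈ config L := by
  simp [config]

/-- The fibres of `v ↦ ∑ i, L 0 i • v i` are the translates of `C(L)` along coordinate `j`. -/
theorem sum_config_mul_card {j : Fin d} (hj : Function.Surjective (L 0 j • · : G → G))
    (F : (Fin d → G) → ℝ) (hF : ∀ v z, F (v + Pi.single j z) = F v) :
    (∑ v ∈ config L, F v) * Fintype.card G = ∑ v, F v := by
  have hfibre : ∀ t : G,
      ∑ v ∈ config L, F v = ∑ v : Fin d → G with ∑ i, L 0 i • v i = t, F v := by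
    intro t
    obtain ⟨z, rfl⟩ := hj t
    refine sum_equiv (Equiv.addRight (Pi.single j z)) (fun v => ?_) (fun v _ => (hF v z).symm)
    simp only [config, mem_filter, mem_univ, true_and, Equiv.coe_addRight,
      sum_zsmul_add_single, add_eq_right]
  rw [← Finset.sum_fiberwise univ (fun v => ∑ i, L 0 i • v i) F,
    ← Finset.sum_congr rfl fun t _ => hfibre t, sum_const, card_univ, nsmul_eq_mul, mul_comm]

theorem card_config_mul_card {j : Fin d} (hj : Function.Surjective (L 0 j • · : G → G)) :
    (config (G := G) L).card * Fintype.card G = Fintype.card G ^ d := by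
  have := sum_config_mul_card L hj (fun _ => (1 : ℝ)) fun _ _ => rfl
  simp only [sum_const, nsmul_eq_mul, mul_one, card_univ, Fintype.card_pi, prod_const,
    Fintype.card_fin] at this
  exact_mod_cast this

theorem sum_config_prod_eq_zero {S : Finset (Fin d)} {i₀ j : Fin d} (hi₀ : i₀ ∈ S)
    (hj : j ∉ S) (hLj : Function.Surjective (L 0 j • · : G → G)) {g : G → ℝ}
    (hg : ∑ x, g x = 0) :
    ∑ v ∈ config L, ∏ i ∈ S, g (v i) = 0 := by
  have hF : ∀ (v : Fin d → G) z,
      ∏ i ∈ S, g ((v + Pi.single j z : Fin d → G) i) = ∏ i ∈ S, g (v i) :=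
    fun v z => prod_congr rfl fun i hi => by
      simp [show i ≠ j from fun h => hj (h ▸ hi)]
  have hall : ∑ v : Fin d → G, ∏ i ∈ S, g (v i) = 0 := by
    calc ∑ v : Fin d → G, ∏ i ∈ S, g (v i)
        = ∑ v : Fin d → G, ∏ i, if i ∈ S then g (v i) else 1 := by
          simp only [prod_ite_mem, univ_inter]
      _ = ∏ i : Fin d, ∑ x, if i ∈ S then g x else 1 := by rw [Fintype.prod_sum]
      _ = 0 := prod_eq_zero (mem_univ i₀) (by simp [hi₀, hg])
  have := sum_config_mul_card L hLj (fun v => ∏ i ∈ S, g (v i)) hF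
  rw [hall] at this
  exact (mul_eq_zero.1 this).resolve_right (by simp)

theorem tL_neg (g : G → ℝ) : tL L (fun x => -g x) = (-1) ^ d * tL L g := by
  simp only [tL, prod_neg, card_univ, Fintype.card_fin, ← mul_sum, mul_div_assoc]

theorem tL_eq_avg_pow_add (hL : ∀ i, Function.Surjective (L 0 i • · : G → G)) (hd : 0 < d)
    (f : G → ℝ) : tL L f = avg f ^ d + tL L (fun x => f x - avg f) := by
  set g : G → ℝ := fun x => f x - avg f
  have hmixed : ∀ S ∈ (univ : Finset (Fin d)).powerset, S ≠ ∅ ∧ S ≠ univ →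
      ∑ v ∈ config L, (∏ i ∈ S, g (v i)) * ∏ _i ∈ univ \ S, avg f = 0 := by
    rintro S - ⟨hS₀, hSuniv⟩
    obtain ⟨i₀, hi₀⟩ := nonempty_iff_ne_empty.2 hS₀
    obtain ⟨j, -, hj⟩ := exists_of_ssubset (ssubset_univ_iff.2 hSuniv)
    rw [← sum_mul, sum_config_prod_eq_zero L hi₀ hj (hL j) (sum_sub_avg_eq_zero f), zero_mul]
  have hsum : ∑ v ∈ config L, ∏ i, f (v i)
      = (config (G := G) L).card * avg f ^ d + ∑ v ∈ config L, ∏ i, g (v i) := by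
    calc ∑ v ∈ config L, ∏ i, f (v i)
        = ∑ v ∈ config L, ∏ i, (g (v i) + avg f) := by simp only [g, sub_add_cancel]
      _ = ∑ S ∈ (univ : Finset (Fin d)).powerset,
            ∑ v ∈ config L, (∏ i ∈ S, g (v i)) * ∏ _i ∈ univ \ S, avg f := by
          simp only [prod_add, sum_comm (s := config L)]
      _ = _ := by
          rw [sum_eq_add_of_mem ∅ univ (empty_mem_powerset _) (mem_powerset_self _)
            (univ_nonempty_iff.2 ⟨⟨0, hd⟩⟩).ne_empty.symm hmixed]
          simp
  have hC : ((config (G := G) L).card : ℝ) ≠ 0 := by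
    exact_mod_cast (card_pos.2 ⟨0, zero_mem_config L⟩).ne'
  rw [tL, tL, hsum, add_div, mul_div_cancel_left₀ _ hC]

theorem tL_indicator_zero :
    tL L (fun x : G => if x = 0 then 1 else 0) = ((config (G := G) L).card : ℝ)⁻¹ := by
  have hsum : ∑ v ∈ config (G := G) L, ∏ i, (if v i = 0 then (1 : ℝ) else 0) = 1 := by
    rw [sum_eq_single_of_mem 0 (zero_mem_config L)]
    · simp
    · intro v _ hv
      obtain ⟨i, hi⟩ := Function.ne_iff.1 hv
      exact prod_eq_zero (mem_univ i) (if_neg hi : (if v i = 0 then (1 : ℝ) else 0) = 0)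
  rw [tL, hsum, one_div]

theorem avg_indicator_zero_pow_lt_tL (hL : ∀ i, Function.Surjective (L 0 i • · : G → G))
    (hd : 0 < d) (hG : 1 < Fintype.card G) :
    avg (fun x : G => if x = 0 then 1 else 0) ^ d
      < tL L (fun x : G => if x = 0 then 1 else 0) := by
  have hcard := card_config_mul_card L (hL ⟨0, hd⟩)
  have hC : 0 < (config (G := G) L).card := card_pos.2 ⟨0, zero_mem_config L⟩
  have hlt : (config (G := G) L).card < Fintype.card G ^ d := by
    rw [← hcard]
    exact lt_mul_of_one_lt_right hC hG
  rw [tL_indicator_zero, avg, sum_ite_eq' univ (0 : G), if_pos (mem_univ _), div_pow, one_pow,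
    one_div]
  exact inv_strictAnti₀ (by exact_mod_cast hC) (by exact_mod_cast hlt)

end Config

/-- If `|G| > 1`, all coefficients of `L ∈ ℤ^{1×d}` are coprime to `|G|` and `d` is odd, then `L`
is not fully Sidorenko in `G`. -/
theorem single_equation_odd_not_fully_sidorenko {d : ℕ} (L : Matrix (Fin 1) (Fin d) ℤ)
    (hG : 1 < Fintype.card G)
    (hcop : ∀ i, IsCoprime (L 0 i) (Fintype.card G : ℤ))
    (hd : Odd d) :
    ∃ f : G → ℝ, (∀ x, f x ∈ Set.Icc (0 : ℝ) 1) ∧ tL L f < (avg f) ^ d := by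
  have hL i : Function.Surjective (L 0 i • · : G → G) :=
    zsmul_surjective_of_isCoprime_card (hcop i)
  set δ : G → ℝ := fun x => if x = 0 then 1 else 0
  refine ⟨fun x => 1 - δ x, fun x => by by_cases hx : x = 0 <;> simp [δ, hx], ?_⟩
  have hcentre : (fun x => 1 - δ x - avg (fun y => 1 - δ y)) = fun x => -(δ x - avg δ) := by
    funext x
    rw [avg_const_sub]
    ring
  rw [tL_eq_avg_pow_add L hL hd.pos, hcentre, tL_neg, hd.neg_one_pow]
  linarith [tL_eq_avg_pow_add L hL hd.pos δ, avg_indicator_zero_pow_lt_tL L hL hd.pos hG]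
end

section
/- Let G be a finite abelian group, d ≥ 3 and L ∈ ℤ^{1×d}. If at least three coefficients of L are coprime to |G|, then |C^#(L)| ≤ (d choose 2) · |C(L)| / |G|. -/
open Finset

variable {G : Type*} [AddCommGroup G] [Fintype G] [DecidableEq G]

/-- The set `C^#(L)` of non-injective instances of the configuration. -/
def nonInj {d : ℕ} (L : Matrix (Fin 1) (Fin d) ℤ) : Finset (Fin d → G) :=
  (config (G := G) L).filter fun v => ∃ i j, i ≠ j ∧ v i = v j

/-! For `i ≠ j`, pick a third index `k` whose coefficient is invertible modulo `|G|`. Changing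
`v j` by `h` and compensating at `v k` keeps `v` in `C(L)`, so `v ↦ v j - v i` maps `C(L)` onto
`G` with fibres that are translates of one another; hence exactly `|C(L)|/|G|` instances satisfy
`v i = v j`, and a union bound over the `d.choose 2` pairs `i < j` gives the estimate. -/

theorem Finset.exists_mem_ne_ne {α : Type*} [DecidableEq α] {s : Finset α} (hs : 2 < #s)
    (a b : α) : ∃ c ∈ s, c ≠ a ∧ c ≠ b := by
  have : 1 < #(s.erase a) := by have := pred_card_le_card_erase (s := s) (a := a); omega
  obtain ⟨c, hc, hcb⟩ := exists_mem_ne this b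
  exact ⟨c, mem_of_mem_erase hc, ne_of_mem_erase hc, hcb⟩

theorem zsmul_surjective_of_isCoprime_card_s10 {A : Type*} [AddGroup A] [Fintype A] {n : ℤ}
    (hn : IsCoprime n (Fintype.card A)) : Function.Surjective fun x : A => n • x := by
  obtain ⟨a, b, hab⟩ := hn
  refine fun y => ⟨a • y, ?_⟩
  have hcard : ((Fintype.card A : ℤ) * b) • y = 0 := by
    rw [mul_zsmul, natCast_zsmul, card_nsmul_eq_zero]
  calc n • a • y = (1 - (Fintype.card A : ℤ) * b) • y := by rw [← mul_zsmul]; congr 1; linarith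
    _ = y := by simp [sub_zsmul, hcard]

section Config

variable {d : ℕ} (L : Matrix (Fin 1) (Fin d) ℤ)

theorem mem_config {v : Fin d → G} : v ∈ config L ↔ ∑ i, L 0 i • v i = 0 := by
  simp [config]

theorem add_mem_config {v w : Fin d → G} (hv : v ∈ config L) (hw : w ∈ config L) :
    v + w ∈ config L := by
  rw [mem_config] at *
  simp [smul_add, sum_add_distrib, hv, hw]

theorem sub_mem_config {v w : Fin d → G} (hv : v ∈ config L) (hw : w ∈ config L) :
    v - w ∈ config L := by
  rw [mem_config] at *
  simp [smul_sub, sum_sub_distrib, hv, hw]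

theorem exists_mem_config_sub_eq {i j k : Fin d} (hij : i ≠ j) (hki : k ≠ i) (hkj : k ≠ j)
    (hk : IsCoprime (L 0 k) (Fintype.card G : ℤ)) (h : G) :
    ∃ τ ∈ config L, τ j - τ i = h := by
  obtain ⟨x, hx⟩ : ∃ x : G, L 0 k • x = -(L 0 j • h) :=
    zsmul_surjective_of_isCoprime_card_s10 hk _
  refine ⟨Pi.single j h + Pi.single k x, ?_, ?_⟩
  · rw [mem_config]
    simp [Pi.single_apply, smul_add, sum_add_distrib, hx]
  · simp [hij, hki, hkj]

theorem card_config_eq_card_filter_mul_card {i j k : Fin d} (hij : i ≠ j) (hki : k ≠ i) (hkj : k ≠ j)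
    (hk : IsCoprime (L 0 k) (Fintype.card G : ℤ)) :
    #(config (G := G) L) = #{v ∈ config (G := G) L | v i = v j} * Fintype.card G := by
  have hfiber (h : G) :
      #{v ∈ config L | v j - v i = h} = #{v ∈ config (G := G) L | v j - v i = 0} := by
    obtain ⟨τ, hτ, hτh⟩ := exists_mem_config_sub_eq L hij hki hkj hk h
    refine card_nbij' (· - τ) (· + τ) ?_ ?_ (fun _ _ => by simp) (fun _ _ => by simp)
    · intro v hv
      rw [mem_coe, mem_filter] at hv ⊢
      refine ⟨sub_mem_config L hv.1 hτ, ?_⟩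
      simp only [Pi.sub_apply]
      rw [sub_sub_sub_comm, hv.2, hτh, sub_self]
    · intro v hv
      rw [mem_coe, mem_filter] at hv ⊢
      refine ⟨add_mem_config L hv.1 hτ, ?_⟩
      simp only [Pi.add_apply]
      rw [add_sub_add_comm, hv.2, hτh, zero_add]
  calc #(config (G := G) L)
      = ∑ h : G, #{v ∈ config L | v j - v i = h} :=
        card_eq_sum_card_fiberwise fun _ _ => mem_univ _
    _ = ∑ _h : G, #{v ∈ config (G := G) L | v j - v i = 0} := sum_congr rfl fun h _ => hfiber h
    _ = #{v ∈ config (G := G) L | v i = v j} * Fintype.card G := by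
        simp [sub_eq_zero, eq_comm, mul_comm]

theorem nonInj_subset_biUnion :
    nonInj (G := G) L ⊆ Finset.biUnion {p : Fin d × Fin d | p.1 < p.2}
      fun p => {v ∈ config (G := G) L | v p.1 = v p.2} := by
  intro v hv
  obtain ⟨hvL, i, j, hij, hvij⟩ := mem_filter.1 hv
  rcases hij.lt_or_gt with h | h
  · exact mem_biUnion.2 ⟨(i, j), by simpa using h, mem_filter.2 ⟨hvL, hvij⟩⟩
  · exact mem_biUnion.2 ⟨(j, i), by simpa using h, mem_filter.2 ⟨hvL, hvij.symm⟩⟩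

theorem card_nonInj_mul_card_le {s : Finset (Fin d)} (hs : 2 < #s)
    (hs_coprime : ∀ k ∈ s, IsCoprime (L 0 k) (Fintype.card G : ℤ)) :
    #(nonInj (G := G) L) * Fintype.card G ≤ d.choose 2 * #(config (G := G) L) := by
  have hpair (p : Fin d × Fin d) (hp : p.1 < p.2) :
      #(config (G := G) L) = #{v ∈ config (G := G) L | v p.1 = v p.2} * Fintype.card G := by
    obtain ⟨k, hk, hk₁, hk₂⟩ := exists_mem_ne_ne hs p.1 p.2
    exact card_config_eq_card_filter_mul_card L hp.ne hk₁ hk₂ (hs_coprime k hk)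
  calc #(nonInj (G := G) L) * Fintype.card G
      ≤ (∑ p ∈ {p : Fin d × Fin d | p.1 < p.2},
          #{v ∈ config (G := G) L | v p.1 = v p.2}) * Fintype.card G := by
        gcongr
        exact (card_le_card (nonInj_subset_biUnion L)).trans card_biUnion_le
    _ = ∑ _p ∈ {p : Fin d × Fin d | p.1 < p.2}, #(config (G := G) L) := by
        rw [sum_mul]
        exact sum_congr rfl fun p hp => (hpair p (mem_filter.1 hp).2).symm
    _ = d.choose 2 * #(config (G := G) L) := by
        rw [sum_const, Fintype.card_product_filter_lt, Fintype.card_fin, smul_eq_mul]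

end Config

theorem non_injective_instances_bound_general {d : ℕ} (L : Matrix (Fin 1) (Fin d) ℤ)
    (hcop : ∃ i₁ i₂ i₃ : Fin d, i₁ ≠ i₂ ∧ i₁ ≠ i₃ ∧ i₂ ≠ i₃ ∧
      IsCoprime (L 0 i₁) (Fintype.card G : ℤ) ∧
      IsCoprime (L 0 i₂) (Fintype.card G : ℤ) ∧
      IsCoprime (L 0 i₃) (Fintype.card G : ℤ)) :
    ((nonInj (G := G) L).card : ℝ) ≤
      (d.choose 2 : ℝ) * ((config (G := G) L).card : ℝ) / (Fintype.card G : ℝ) := by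
  obtain ⟨i₁, i₂, i₃, h₁₂, h₁₃, h₂₃, c₁, c₂, c₃⟩ := hcop
  have hs : #{i₁, i₂, i₃} = 3 := card_eq_three.2 ⟨i₁, i₂, i₃, h₁₂, h₁₃, h₂₃, rfl⟩
  have hs_coprime : ∀ k ∈ ({i₁, i₂, i₃} : Finset (Fin d)),
      IsCoprime (L 0 k) (Fintype.card G : ℤ) := by
    simp only [mem_insert, mem_singleton]
    rintro k (rfl | rfl | rfl) <;> assumption
  rw [le_div_iff₀ (by exact_mod_cast Fintype.card_pos)]
  exact_mod_cast card_nonInj_mul_card_le L (by omega) hs_coprime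

/-- If `d ≥ 3` and at least three coefficients of `L ∈ ℤ^{1×d}` are coprime to `|G|`, then
`|C^#(L)| ≤ (d choose 2)·|C(L)|/|G|`. -/
theorem non_injective_instances_bound {d : ℕ} (L : Matrix (Fin 1) (Fin d) ℤ)
    (hd : 3 ≤ d)
    (hcop : ∃ i₁ i₂ i₃ : Fin d, i₁ ≠ i₂ ∧ i₁ ≠ i₃ ∧ i₂ ≠ i₃ ∧
      IsCoprime (L 0 i₁) (Fintype.card G : ℤ) ∧
      IsCoprime (L 0 i₂) (Fintype.card G : ℤ) ∧
      IsCoprime (L 0 i₃) (Fintype.card G : ℤ)) :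
    ((nonInj (G := G) L).card : ℝ) ≤
      (d.choose 2 : ℝ) * ((config (G := G) L).card : ℝ) / (Fintype.card G : ℝ) :=
  non_injective_instances_bound_general L hcop
end
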